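/- In any category C with finite coproducts, vacuous guardedness — where f : X → Y is declared σ-guarded iff f factors through the coproduct complement σ̄ of σ — is a notion of abstract guardedness (i.e., it is closed under the rules (trv), (par), (cmp)), and it is the least such notion: for any other notion of abstract guardedness on C, every vacuously σ-guarded morphism is σ-guarded. -/

import Mathlib

open CategoryTheory CategoryTheory.Limits

universe v u

/-- `(σ, σ')` form a binary coproduct cospan, i.e. a summand together with its complement. -/
def IsCoprodCospan {C : Type u} [Category.{v} C] {Y' Y'' Y : C}
    (σ : Y' ⟶ Y) (σ' : Y'' ⟶ Y) : Prop :=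
  Nonempty (IsColimit (BinaryCofan.mk σ σ'))

/-- A notion of abstract guardedness on a category: a relation `guarded f σ σ'`
between morphisms `f : X ⟶ Y` and summands `σ : Y' ⟶ Y` (given together with a chosen
complement `σ' : Y'' ⟶ Y`), closed under the rules (trv), (par) and (cmp). -/
structure Guardedness (C : Type u) [Category.{v} C] where
  guarded : ∀ {X Y' Y'' Y : C}, (X ⟶ Y) → (Y' ⟶ Y) → (Y'' ⟶ Y) → Prop
  trv : ∀ {X Y Z P : C} (i₁ : Y ⟶ P) (i₂ : Z ⟶ P), IsCoprodCospan i₁ i₂ →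
      ∀ f : X ⟶ Y, guarded (f ≫ i₁) i₂ i₁
  par : ∀ {X Y P Z' Z'' Z : C} (j₁ : X ⟶ P) (j₂ : Y ⟶ P), IsCoprodCospan j₁ j₂ →
      ∀ (σ : Z' ⟶ Z) (σ' : Z'' ⟶ Z) (u : P ⟶ Z),
      guarded (j₁ ≫ u) σ σ' → guarded (j₂ ≫ u) σ σ' → guarded u σ σ'
  cmp : ∀ {X Y Z P V' V'' V : C} (i₁ : Y ⟶ P) (i₂ : Z ⟶ P), IsCoprodCospan i₁ i₂ →
      ∀ (σ : V' ⟶ V) (σ' : V'' ⟶ V) (f : X ⟶ P) (u : P ⟶ V),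
      guarded f i₂ i₁ → guarded (i₁ ≫ u) σ σ' → guarded (f ≫ u) σ σ'

/-- `f` is vacuously `σ`-guarded: it factors through the complement `σ'` of `σ`. -/
def VacuouslyGuarded {C : Type u} [Category.{v} C] {X Y' Y'' Y : C}
    (f : X ⟶ Y) (_σ : Y' ⟶ Y) (σ' : Y'' ⟶ Y) : Prop :=
  ∃ g : X ⟶ Y'', f = g ≫ σ'

/-!
A vacuously guarded morphism is one that factors through the complement `σ'`. Such
factorizations compose, which gives (cmp), and glue along a coproduct in the domain, which
gives (par); (trv) holds on the nose. Conversely, `g ≫ σ'` is guarded for every notion of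
guardedness, since it is literally an instance of (trv) for the coproduct cospan `(σ', σ)`.
-/

namespace VacuouslyGuarded

variable {C : Type u} [Category.{v} C]

theorem comp_complement {X Y' Y'' Y : C} (g : X ⟶ Y'') (σ : Y' ⟶ Y) (σ' : Y'' ⟶ Y) :
    VacuouslyGuarded (g ≫ σ') σ σ' :=
  ⟨g, rfl⟩

theorem of_isCoprodCospan {X Y P Z' Z'' Z : C} {j₁ : X ⟶ P} {j₂ : Y ⟶ P}
    (hj : IsCoprodCospan j₁ j₂) {σ : Z' ⟶ Z} {σ' : Z'' ⟶ Z} {u : P ⟶ Z}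
    (h₁ : VacuouslyGuarded (j₁ ≫ u) σ σ') (h₂ : VacuouslyGuarded (j₂ ≫ u) σ σ') :
    VacuouslyGuarded u σ σ' := by
  obtain ⟨hc⟩ := hj
  obtain ⟨g₁, hg₁⟩ := h₁
  obtain ⟨g₂, hg₂⟩ := h₂
  obtain ⟨g, hg₁', hg₂'⟩ : ∃ g : P ⟶ Z'', j₁ ≫ g = g₁ ∧ j₂ ≫ g = g₂ :=
    ⟨_, (BinaryCofan.IsColimit.desc' hc g₁ g₂).2⟩
  refine ⟨g, BinaryCofan.IsColimit.hom_ext hc ?_ ?_⟩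
  · show j₁ ≫ u = j₁ ≫ g ≫ σ'
    rw [hg₁, ← hg₁', Category.assoc]
  · show j₂ ≫ u = j₂ ≫ g ≫ σ'
    rw [hg₂, ← hg₂', Category.assoc]

theorem comp {X Y Z P V' V'' V : C} {i₁ : Y ⟶ P} {i₂ : Z ⟶ P} {σ : V' ⟶ V} {σ' : V'' ⟶ V}
    {f : X ⟶ P} {u : P ⟶ V} (hf : VacuouslyGuarded f i₂ i₁)
    (hu : VacuouslyGuarded (i₁ ≫ u) σ σ') : VacuouslyGuarded (f ≫ u) σ σ' := by
  obtain ⟨g, rfl⟩ := hf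
  obtain ⟨h, hh⟩ := hu
  exact ⟨g ≫ h, by simp [hh]⟩

end VacuouslyGuarded

namespace Guardedness

variable {C : Type u} [Category.{v} C]

def vacuous (C : Type u) [Category.{v} C] : Guardedness C where
  guarded := VacuouslyGuarded
  trv i₁ i₂ _ f := VacuouslyGuarded.comp_complement f i₂ i₁
  par _ _ hj _ _ _ := VacuouslyGuarded.of_isCoprodCospan hj
  cmp _ _ _ _ _ _ _ := VacuouslyGuarded.comp

theorem guarded_of_vacuouslyGuarded (G : Guardedness C) {X Y' Y'' Y : C} {f : X ⟶ Y}
    {σ : Y' ⟶ Y} {σ' : Y'' ⟶ Y} (hσ : IsCoprodCospan σ' σ) (hf : VacuouslyGuarded f σ σ') :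
    G.guarded f σ σ' := by
  obtain ⟨g, rfl⟩ := hf
  exact G.trv σ' σ hσ g

end Guardedness

theorem vacuous_guardedness_least (C : Type u) [Category.{v} C] :
    (∃ G : Guardedness C, ∀ (X Y' Y'' Y : C) (f : X ⟶ Y) (σ : Y' ⟶ Y) (σ' : Y'' ⟶ Y),
        G.guarded f σ σ' ↔ VacuouslyGuarded f σ σ') ∧
    (∀ (G : Guardedness C) (X Y' Y'' Y : C) (f : X ⟶ Y) (σ : Y' ⟶ Y) (σ' : Y'' ⟶ Y),
        IsCoprodCospan σ' σ → VacuouslyGuarded f σ σ' → G.guarded f σ σ') :=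
  ⟨⟨Guardedness.vacuous C, fun _ _ _ _ _ _ _ => Iff.rfl⟩,
    fun G _ _ _ _ _ _ _ hσ hf => G.guarded_of_vacuouslyGuarded hσ hf⟩
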